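/- Let α_1,…,α_n be pairwise distinct elements of a finite field F_q, let δ ∈ F_q, and let k, r be integers with 6 ≤ 2k ≤ n and 1 ≤ r ≤ k−1. If every k×k submatrix of G_2 is nonsingular (i.e. the code C_2 generated by G_2 is an [n+2,k] MDS code), then C_2 is not monomially equivalent to any GRS code of length n+2 over F_q; that is, C_2 is a non-GRS MDS code. -/

import Mathlib

open Finset Matrix

/-- Elementary symmetric polynomial `σ_t` evaluated at the values `x 0, …, x (m-1)`. -/
def esymmV {F : Type*} [CommRing F] {m : ℕ} (t : ℕ) (x : Fin m → F) : F :=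
  ∑ A ∈ Finset.univ.powersetCard t, ∏ i ∈ A, x i

/-- Complete homogeneous symmetric polynomial `S_t` evaluated at `x 0, …, x (m-1)`. -/
def hsymmV {F : Type*} [CommRing F] {m : ℕ} (t : ℕ) (x : Fin m → F) : F :=
  ∑ d ∈ Finset.Nat.antidiagonalTuple m t, ∏ i, x i ^ d i

/-- The exponent of the `i`-th row (0-indexed): the elements of
`{0,…,k−r−1} ∪ {k−r+1,…,k}` in increasing order. -/
def expo (k r : ℕ) (i : Fin k) : ℕ := if (i : ℕ) < k - r then (i : ℕ) else (i : ℕ) + 1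

/-- The Vandermonde product `∏_{i<j} (α_j − α_i)`. -/
def vand {F : Type*} [CommRing F] {n : ℕ} (α : Fin n → F) : F :=
  ∏ i : Fin n, ∏ j ∈ Finset.Ioi i, (α j - α i)

/-- The matrix `G_{r,k}`: rows are `(α_1^e, …, α_n^e)` for
`e ∈ {0,…,k−r−1} ∪ {k−r+1,…,k}` in increasing order. -/
def Grk {F : Type*} [Field F] {n : ℕ} (α : Fin n → F) (k r : ℕ) : Matrix (Fin k) (Fin n) F :=
  Matrix.of fun i j => α j ^ expo k r i

/-- The matrix `G_1`: `G_{r,k}` with the extra column `(0,…,0,1)ᵀ` appended. -/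
def G1 {F : Type*} [Field F] {n : ℕ} (α : Fin n → F) (k r : ℕ) :
    Matrix (Fin k) (Fin (n + 1)) F :=
  Matrix.of fun i j =>
    if hj : (j : ℕ) < n then α ⟨j, hj⟩ ^ expo k r i
    else if (i : ℕ) = k - 1 then 1 else 0

/-- The matrix `G_2`: `G_1` with the extra column `(0,…,0,1,δ)ᵀ` appended
(entry `1` in row `k−1`, i.e. index `k−2`, and `δ` in row `k`, i.e. index `k−1`). -/
def G2 {F : Type*} [Field F] {n : ℕ} (α : Fin n → F) (k r : ℕ) (δ : F) :
    Matrix (Fin k) (Fin (n + 2)) F :=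
  Matrix.of fun i j =>
    if hj : (j : ℕ) < n then α ⟨j, hj⟩ ^ expo k r i
    else if (j : ℕ) = n then (if (i : ℕ) = k - 1 then 1 else 0)
    else (if (i : ℕ) = k - 2 then 1 else if (i : ℕ) = k - 1 then δ else 0)

/-- `u_i = ∏_{j ≠ i} (α_i − α_j)⁻¹`. -/
def uCoef {F : Type*} [Field F] {n : ℕ} (α : Fin n → F) (i : Fin n) : F :=
  ∏ j ∈ Finset.univ.erase i, (α i - α j)⁻¹

/-- `Λ_{r,i} = ∑_{j=0}^{r} (−1)^j σ_j α_i^{(n−k)+(r−1)−j}`. -/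
def Lam {F : Type*} [Field F] {n : ℕ} (α : Fin n → F) (k r : ℕ) (i : Fin n) : F :=
  ∑ j ∈ Finset.range (r + 1), (-1 : F) ^ j * esymmV j α * α i ^ ((n - k) + (r - 1) - j)

/-- Every `k×k` submatrix of `G` is nonsingular. -/
def allSubNonsing {F : Type*} [Field F] {k m : ℕ} (G : Matrix (Fin k) (Fin m) F) : Prop :=
  ∀ c : Fin k → Fin m, Function.Injective c → (G.submatrix id c).det ≠ 0

/-- The linear code spanned by the rows of `G`. -/
def rowSpan {F : Type*} [Field F] {k m : ℕ} (G : Matrix (Fin k) (Fin m) F) :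
    Submodule F (Fin m → F) :=
  Submodule.span F (Set.range fun i => G i)

/-- The dual code `C^⊥ = {x : ∑ x_i c_i = 0 for all c ∈ C}`, as a set. -/
def dualSet {F : Type*} [Field F] {m : ℕ} (C : Set (Fin m → F)) : Set (Fin m → F) :=
  {x | ∀ c ∈ C, ∑ i, x i * c i = 0}

/-- The extended code of `C` with respect to `w`. -/
def extCode {F : Type*} [Field F] {m : ℕ} (C : Set (Fin m → F)) (w : Fin m → F) :
    Set (Fin (m + 1) → F) :=
  {y | ∃ c ∈ C, (∀ i : Fin m, y (Fin.castSucc i) = c i) ∧ y (Fin.last m) = ∑ i, w i * c i}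

/-- `C` is a GRS code of length `m` and dimension `kk` over `F`:
evaluation points are pairwise distinct elements of `F ∪ {∞}` (with `∞ = none`),
the multipliers `v i` are nonzero, and `f(∞)` is the coefficient of `x^(kk−1)`. -/
def isGRS {F : Type*} [Field F] (m kk : ℕ) (C : Set (Fin m → F)) : Prop :=
  ∃ (β : Fin m → Option F) (v : Fin m → F),
    Function.Injective β ∧ (∀ i, v i ≠ 0) ∧
    C = {c | ∃ f : Polynomial F, f.degree < (kk : WithBot ℕ) ∧
      ∀ i, c i = v i * (match β i with
        | some x => Polynomial.eval x f
        | none => f.coeff (kk - 1))}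

/-- Monomial equivalence of codes. -/
def monEquiv {F : Type*} [Field F] {m : ℕ} (C C' : Set (Fin m → F)) : Prop :=
  ∃ (π : Equiv.Perm (Fin m)) (lam : Fin m → F),
    (∀ i, lam i ≠ 0) ∧ C' = {y | ∃ c ∈ C, ∀ i, y i = lam i * c (π i)}


/-!
The Schur square `C * C` of a code, spanned by the componentwise products of codewords, has a
dimension invariant under monomial equivalence, and the Schur square of a GRS code of dimension
`kk` lies in a GRS code of dimension `2kk - 1`. For `C₂`, let `g₀, …, g_{k-1}` be the rows of `G₂`
and `h = g_{k-1} - δ g_{k-2}`, which vanishes at the last coordinate. The products of `g₀` and of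
`h` with `g₀, …, g_{k-2}` vanish at both extra coordinates and, on the first `n`, are the values at
the `α_j` of `2k - 2` polynomials of distinct degrees `< n`; together with `g_{k-2}²` and `h²`,
which the extra coordinates separate, they give `dim C₂² ≥ 2k`. An equivalent GRS code would have
dimension `kk = dim C₂ ≤ k`, hence a Schur square of dimension at most `2k - 1`.
-/

section C2

open Polynomial Module

section LinearAlgebra

variable {K ι κ : Type*} [Field K]

theorem LinearIndependent.option_of_apply_eq_zero {v : ι → κ → K} (hv : LinearIndependent K v)
    {x : κ → K} {j : κ} (hvj : ∀ i, v i j = 0) (hxj : x j ≠ 0) :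
    LinearIndependent K (fun o => Option.casesOn' o x v : Option ι → κ → K) :=
  hv.option fun hx => hxj <|
    (Submodule.span_le.2 (Set.range_subset_iff.2 hvj) : _ ≤ LinearMap.ker (LinearMap.proj j)) hx

theorem card_add_two_le_finrank [Fintype ι] [Finite κ] {V : Submodule K (κ → K)} {u : ι → κ → K}
    (hu : LinearIndependent K u) (huV : ∀ i, u i ∈ V) {x y : κ → K} (hxV : x ∈ V) (hyV : y ∈ V)
    {j₁ j₂ : κ} (hu₁ : ∀ i, u i j₁ = 0) (hu₂ : ∀ i, u i j₂ = 0) (hx₁ : x j₁ = 0) (hx₂ : x j₂ ≠ 0)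
    (hy₁ : y j₁ ≠ 0) :
    Fintype.card ι + 2 ≤ finrank K V := by
  have hψ := (hu.option_of_apply_eq_zero hu₂ hx₂).option_of_apply_eq_zero (x := y)
    (by rintro (_ | i) <;> simp [hx₁, hu₁]) hy₁
  calc Fintype.card ι + 2 = Fintype.card (Option (Option ι)) := by simp
    _ = finrank K (Submodule.span K (Set.range _)) := (finrank_span_eq_card hψ).symm
    _ ≤ finrank K V := Submodule.finrank_mono <| Submodule.span_le.2 <|
        Set.range_subset_iff.2 <| by rintro (_ | _ | i) <;> simp [hxV, hyV, huV]

theorem Submodule.finrank_map_of_disjoint_ker {M N : Type*} [AddCommGroup M] [Module K M]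
    [AddCommGroup N] [Module K N] {f : M →ₗ[K] N} {p : Submodule K M}
    (h : Disjoint p (LinearMap.ker f)) : finrank K (p.map f) = finrank K p := by
  rw [← LinearMap.range_domRestrict,
    LinearMap.finrank_range_of_inj (LinearMap.injective_domRestrict_iff.2 h)]

theorem finrank_rowSpan_le {k m : ℕ} (G : Matrix (Fin k) (Fin m) K) :
    finrank K (rowSpan G) ≤ k :=
  (finrank_range_le_card _).trans_eq (Fintype.card_fin k)

end LinearAlgebra

namespace Polynomial

variable {K ι : Type*} [Field K]

theorem finrank_degreeLT (m : ℕ) : finrank K (degreeLT K m) = m :=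
  (degreeLTEquiv K m).finrank_eq.trans (finrank_fin_fun K)

theorem linearIndependent_of_natDegree_injective {p : ι → K[X]} (hp : ∀ i, p i ≠ 0)
    (hdeg : Function.Injective (natDegree ∘ p)) : LinearIndependent K p := by
  classical
  rw [linearIndependent_iff']
  intro s g hsum i hi
  by_contra hgi
  have hdeg_smul : ∀ j, g j ≠ 0 → (g j • p j).degree = (p j).natDegree := fun j hj => by
    rw [smul_eq_C_mul, degree_C_mul hj, degree_eq_natDegree (hp j)]
  have hpair : Set.Pairwise {j | j ∈ s ∧ g j • p j ≠ 0}
      (Function.onFun Ne fun j => (g j • p j).degree) := by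
    rintro a ⟨-, ha⟩ b ⟨-, hb⟩ hab
    simp only [Function.onFun, hdeg_smul a (left_ne_zero_of_smul ha),
      hdeg_smul b (left_ne_zero_of_smul hb), ne_eq, Nat.cast_inj]
    exact fun h => hab (hdeg h)
  have hsup := degree_sum_eq_of_disjoint _ s hpair
  rw [hsum, degree_zero] at hsup
  have hle := Finset.le_sup (f := fun j => (g j • p j).degree) hi
  rw [← hsup, hdeg_smul i hgi] at hle
  exact WithBot.coe_ne_bot (le_bot_iff.1 hle)

theorem linearIndependent_sumElim_X_pow_mul {q : K[X]} (hq : q.Monic) {e : ι → ℕ}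
    (he : Function.Injective e) (heq : ∀ i, e i < q.natDegree) :
    LinearIndependent K (Sum.elim (fun i => X ^ e i) fun i => q * X ^ e i) := by
  refine linearIndependent_of_natDegree_injective (by rintro (i | i) <;> simp [hq.ne_zero]) ?_
  have hdeg : natDegree ∘ Sum.elim (fun i => X ^ e i) (fun i => q * X ^ e i) =
      Sum.elim e fun i => q.natDegree + e i := by
    ext (i | i) <;> simp [hq.natDegree_mul (monic_X_pow _)]
  rw [hdeg]
  exact he.sumElim ((add_right_injective _).comp he) fun i j => by have := heq i; omega

theorem linearIndependent_aeval {n : ℕ} {α : Fin n → K} (hα : Function.Injective α)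
    {p : ι → K[X]} (hp : LinearIndependent K p) (hdeg : ∀ i, (p i).natDegree < n) :
    LinearIndependent K fun i => aeval α (p i) := by
  refine hp.map (f := (aeval α).toLinearMap) ?_
  rw [Submodule.disjoint_def]
  intro q hq hker
  have hq_deg : q.degree < n := mem_degreeLT.1 <| Submodule.span_le.2
    (Set.range_subset_iff.2 fun i => mem_degreeLT.2 <| degree_le_natDegree.trans_lt
      (WithBot.coe_lt_coe.2 (hdeg i))) hq
  refine eq_zero_of_degree_lt_of_eval_index_eq_zero Finset.univ hα.injOn (by simpa using hq_deg)
    fun j _ => ?_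
  simpa [aeval_pi_apply₂] using congrFun (LinearMap.mem_ker.1 hker) j

theorem linearIndependent_aeval_sumElim_X_pow_mul {n : ℕ} {α : Fin n → K}
    (hα : Function.Injective α) {q : K[X]} (hq : q.Monic) {e : ι → ℕ}
    (he : Function.Injective e) (heq : ∀ i, e i < q.natDegree)
    (hn : ∀ i, q.natDegree + e i < n) :
    LinearIndependent K (Sum.elim (fun i => α ^ e i) fun i => aeval α q * α ^ e i) := by
  convert linearIndependent_aeval hα (linearIndependent_sumElim_X_pow_mul hq he heq) ?_ using 1
  · ext (i | i) <;> simp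
  · rintro (i | i)
    · simpa using (heq i).trans_le ((Nat.le_add_right _ _).trans (hn i).le)
    · simpa [hq.natDegree_mul (monic_X_pow _)] using hn i

end Polynomial

section Monomial

variable {K ι : Type*} [Field K]

def monomialMap (π : Equiv.Perm ι) (lam : ι → K) : (ι → K) →ₗ[K] (ι → K) :=
  LinearMap.mulLeft K lam ∘ₗ LinearMap.funLeft K K π

@[simp]
theorem monomialMap_apply (π : Equiv.Perm ι) (lam x : ι → K) (i : ι) :
    monomialMap π lam x i = lam i * x (π i) :=
  rfl

theorem ker_monomialMap {π : Equiv.Perm ι} {lam : ι → K} (hlam : ∀ i, lam i ≠ 0) :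
    LinearMap.ker (monomialMap π lam) = ⊥ := by
  refine LinearMap.ker_eq_bot.2 fun x y hxy => funext fun i => ?_
  simpa [hlam (π.symm i)] using congrFun hxy (π.symm i)

theorem finrank_map_monomialMap {π : Equiv.Perm ι} {lam : ι → K} (hlam : ∀ i, lam i ≠ 0)
    (p : Submodule K (ι → K)) : finrank K (p.map (monomialMap π lam)) = finrank K p :=
  Submodule.finrank_map_of_disjoint_ker (by rw [ker_monomialMap hlam]; exact disjoint_bot_right)

theorem map_monomialMap_mul (π : Equiv.Perm ι) (lam : ι → K) (C D : Submodule K (ι → K)) :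
    C.map (monomialMap π lam) * D.map (monomialMap π lam) =
      (C * D).map (monomialMap π (lam * lam)) := by
  rw [Submodule.mul_eq_span_mul_set, Submodule.mul_eq_span_mul_set, Submodule.map_span,
    Submodule.map_coe, Submodule.map_coe, ← Set.image2_mul, ← Set.image2_mul,
    Set.image_image2_distrib fun x y => ?_]
  ext i
  simp only [monomialMap_apply, Pi.mul_apply]
  ring

theorem monEquiv.eq_map {m : ℕ} {C : Submodule K (Fin m → K)} {C' : Set (Fin m → K)}
    (h : monEquiv (C : Set (Fin m → K)) C') :
    ∃ (π : Equiv.Perm (Fin m)) (lam : Fin m → K), (∀ i, lam i ≠ 0) ∧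
      C' = C.map (monomialMap π lam) := by
  obtain ⟨π, lam, hlam, rfl⟩ := h
  refine ⟨π, lam, hlam, ?_⟩
  ext y
  simp [funext_iff, eq_comm]

end Monomial

section GRS

variable {K ι : Type*} [Field K]

/-- Evaluation at a point of `K ∪ {∞}`, with `∞ = none` and `f(∞)` the coefficient of
`X^(kk-1)`, as in `isGRS`. -/
noncomputable def projEval (kk : ℕ) : Option K → K[X] →ₗ[K] K
  | some x => leval x
  | none => lcoeff K (kk - 1)

noncomputable def grsMap (kk : ℕ) (β : ι → Option K) (v : ι → K) : K[X] →ₗ[K] (ι → K) :=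
  LinearMap.pi fun i => v i • projEval kk (β i)

@[simp]
theorem grsMap_apply (kk : ℕ) (β : ι → Option K) (v : ι → K) (f : K[X]) (i : ι) :
    grsMap kk β v f i = v i * projEval kk (β i) f :=
  rfl

theorem isGRS.eq_map {m kk : ℕ} {C : Set (Fin m → K)} (h : isGRS m kk C) :
    ∃ (β : Fin m → Option K) (v : Fin m → K), Function.Injective β ∧ (∀ i, v i ≠ 0) ∧
      C = (degreeLT K kk).map (grsMap kk β v) := by
  obtain ⟨β, v, hβ, hv, rfl⟩ := h
  refine ⟨β, v, hβ, hv, ?_⟩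
  have hmatch : ∀ (f : K[X]) i, (match β i with
      | some x => eval x f
      | none => f.coeff (kk - 1)) = projEval kk (β i) f := fun f i => by
    cases β i <;> rfl
  ext c
  simp [mem_degreeLT, funext_iff, hmatch, eq_comm]

theorem disjoint_degreeLT_ker_grsMap [Fintype ι] {kk : ℕ} {β : ι → Option K} {v : ι → K}
    (hβ : Function.Injective β) (hv : ∀ i, v i ≠ 0) (hkk : kk ≤ Fintype.card ι) :
    Disjoint (degreeLT K kk) (LinearMap.ker (grsMap kk β v)) := by
  classical
  rw [Submodule.disjoint_def]
  intro f hf hker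
  have hβf : ∀ i, projEval kk (β i) f = 0 := fun i => by
    simpa [hv i] using congrFun (LinearMap.mem_ker.1 hker) i
  have hcard : #(univ.image β) = Fintype.card ι := by
    rw [card_image_of_injective _ hβ, card_univ]
  refine eq_zero_of_degree_lt_of_eval_finset_eq_zero (univ.image β).eraseNone ?_ fun x hx => ?_
  · by_cases hnone : none ∈ univ.image β
    · obtain ⟨i, -, hi⟩ := mem_image.1 hnone
      have htop : f.coeff (kk - 1) = 0 := by simpa [hi, projEval] using hβf i
      have hdeg : f.degree < (kk - 1 : ℕ) := by
        rw [degree_lt_iff_coeff_zero]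
        intro m hm
        rcases eq_or_ne m (kk - 1) with rfl | hne
        · exact htop
        · exact coeff_eq_zero_of_degree_lt ((mem_degreeLT.1 hf).trans_le
            (Nat.cast_le.2 (by omega)))
      rw [card_eraseNone_of_mem hnone, hcard]
      exact hdeg.trans_le (Nat.cast_le.2 (by omega))
    · rw [card_eraseNone_of_not_mem hnone, hcard]
      exact (mem_degreeLT.1 hf).trans_le (Nat.cast_le.2 hkk)
  · obtain ⟨i, -, hi⟩ := mem_image.1 (mem_eraseNone.1 hx)
    simpa [hi, projEval] using hβf i

theorem finrank_map_grsMap [Fintype ι] {kk : ℕ} {β : ι → Option K} {v : ι → K}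
    (hβ : Function.Injective β) (hv : ∀ i, v i ≠ 0) (hkk : kk ≤ Fintype.card ι) :
    finrank K ((degreeLT K kk).map (grsMap kk β v)) = kk := by
  rw [Submodule.finrank_map_of_disjoint_ker (f := grsMap kk β v)
      (disjoint_degreeLT_ker_grsMap hβ hv hkk),
    finrank_degreeLT]

theorem map_grsMap_mul_le (a b : ℕ) (β : ι → Option K) (v w : ι → K) :
    (degreeLT K (a + 1)).map (grsMap (a + 1) β v) * (degreeLT K (b + 1)).map (grsMap (b + 1) β w)
      ≤ (degreeLT K (a + b + 1)).map (grsMap (a + b + 1) β (v * w)) := by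
  rw [Submodule.mul_le]
  rintro _ ⟨f, hf, rfl⟩ _ ⟨g, hg, rfl⟩
  rw [SetLike.mem_coe, degreeLT_succ_eq_degreeLE, mem_degreeLE] at hf hg
  refine ⟨f * g, ?_, ?_⟩
  · rw [SetLike.mem_coe, degreeLT_succ_eq_degreeLE, mem_degreeLE]
    exact degree_mul_le_of_le hf hg
  · ext i
    rcases hβi : β i with _ | x
    · simp [hβi, projEval, coeff_mul_add_eq_of_natDegree_le (natDegree_le_iff_degree_le.2 hf)
        (natDegree_le_iff_degree_le.2 hg)]
      ring
    · simp [hβi, projEval]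
      ring

theorem finrank_map_grsMap_mul_self_le {kk : ℕ} (hkk : kk ≠ 0) (β : ι → Option K) (v : ι → K) :
    finrank K ((degreeLT K kk).map (grsMap kk β v) * (degreeLT K kk).map (grsMap kk β v)) ≤
      2 * kk - 1 := by
  obtain ⟨j, rfl⟩ := Nat.exists_eq_succ_of_ne_zero hkk
  calc _ ≤ finrank K ((degreeLT K (j + j + 1)).map (grsMap (j + j + 1) β (v * v))) :=
        Submodule.finrank_mono (map_grsMap_mul_le j j β v v)
    _ ≤ finrank K (degreeLT K (j + j + 1)) := Submodule.finrank_map_le _ _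
    _ = 2 * (j + 1) - 1 := by rw [finrank_degreeLT]; omega

end GRS

section G2

variable {K : Type*} [Field K] {n : ℕ} (α : Fin n → K) (δ : K) {k r : ℕ}

theorem expo_strictMono : StrictMono (expo k r) := fun i j h => by
  rw [Fin.lt_def] at h
  unfold expo
  split_ifs <;> omega

theorem expo_le_succ (i : Fin k) : expo k r i ≤ i + 1 := by
  unfold expo
  split_ifs <;> omega

@[simp]
theorem G2_apply_castAdd (i : Fin k) (j : Fin n) :
    G2 α k r δ i (Fin.castAdd 2 j) = α j ^ expo k r i := by
  simp [G2]

@[simp]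
theorem G2_apply_castSucc_last (i : Fin k) :
    G2 α k r δ i (Fin.last n).castSucc = if (i : ℕ) = k - 1 then 1 else 0 := by
  simp [G2]

@[simp]
theorem G2_apply_last (i : Fin k) :
    G2 α k r δ i (Fin.last (n + 1)) =
      if (i : ℕ) = k - 2 then 1 else if (i : ℕ) = k - 1 then δ else 0 := by
  simp [G2]

theorem linearIndependent_G2_mul (hα : Function.Injective α) (hk : 3 ≤ k) (hkn : 2 * k ≤ n)
    (hr1 : 1 ≤ r) (hrk : r < k) :
    LinearIndependent K (Sum.elim
      (fun i : Fin (k - 1) => G2 α k r δ ⟨0, by omega⟩ * G2 α k r δ (Fin.castLE (Nat.sub_le k 1) i))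
      fun i : Fin (k - 1) => (G2 α k r δ ⟨k - 1, by omega⟩ - δ • G2 α k r δ ⟨k - 2, by omega⟩) *
        G2 α k r δ (Fin.castLE (Nat.sub_le k 1) i)) := by
  set a := expo k r ⟨k - 2, by omega⟩
  have ha : a < k := (expo_le_succ _).trans_lt (by simp; omega)
  have hq : (X ^ k - C δ * X ^ a : K[X]).Monic :=
    monic_X_pow_sub ((degree_C_mul_X_pow_le a δ).trans_lt (Nat.cast_lt.2 ha))
  have hqdeg : (X ^ k - C δ * X ^ a : K[X]).natDegree = k := by
    rw [natDegree_sub_eq_left_of_natDegree_lt] <;> rw [natDegree_X_pow]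
    exact (natDegree_C_mul_X_pow_le δ a).trans_lt ha
  have hlow : ∀ i : Fin (k - 1), expo k r (Fin.castLE (Nat.sub_le k 1) i) < k := fun i =>
    (expo_le_succ _).trans_lt (by simp; omega)
  have hexpo0 : expo k r ⟨0, by omega⟩ = 0 := by simp [expo]; omega
  have hexpo_top : expo k r ⟨k - 1, by omega⟩ = k := by simp only [expo]; split_ifs <;> omega
  refine LinearIndependent.of_comp (LinearMap.funLeft K K (Fin.castAdd 2)) ?_
  convert linearIndependent_aeval_sumElim_X_pow_mul hα hq
    (e := fun i : Fin (k - 1) => expo k r (Fin.castLE (Nat.sub_le k 1) i))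
    (expo_strictMono.injective.comp (Fin.castLE_injective _))
    (fun i => by rw [hqdeg]; exact hlow i) (fun i => by rw [hqdeg]; have := hlow i; omega) using 1
  ext (i | i) j
  · simp [hexpo0]
  · simp [hexpo_top, a]

theorem two_mul_le_finrank_rowSpan_G2_mul_self (hα : Function.Injective α) (hk : 3 ≤ k)
    (hkn : 2 * k ≤ n) (hr1 : 1 ≤ r) (hrk : r < k) :
    2 * k ≤ finrank K ↥(rowSpan (G2 α k r δ) * rowSpan (G2 α k r δ)) := by
  set V := rowSpan (G2 α k r δ)
  have hgV : ∀ i, G2 α k r δ i ∈ V := fun i => Submodule.subset_span ⟨i, rfl⟩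
  have hhV : G2 α k r δ ⟨k - 1, by omega⟩ - δ • G2 α k r δ ⟨k - 2, by omega⟩ ∈ V :=
    V.sub_mem (hgV _) (V.smul_mem δ (hgV _))
  have h01 : 0 ≠ k - 1 := by omega
  have h02 : 0 ≠ k - 2 := by omega
  have h21 : k - 2 ≠ k - 1 := by omega
  have hcard := card_add_two_le_finrank (linearIndependent_G2_mul α δ hα hk hkn hr1 hrk)
    (by rintro (i | i)
        exacts [Submodule.mul_mem_mul (hgV _) (hgV _), Submodule.mul_mem_mul hhV (hgV _)])
    (Submodule.mul_mem_mul (hgV ⟨k - 2, by omega⟩) (hgV ⟨k - 2, by omega⟩))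
    (Submodule.mul_mem_mul hhV hhV)
    (j₁ := (Fin.last n).castSucc) (j₂ := Fin.last (n + 1))
    (by rintro (i | i) <;> simp [i.isLt.ne, h01, h21])
    (by rintro (i | i) <;> simp [i.isLt.ne, h01, h02, h21.symm])
    (by simp [h21]) (by simp) (by simp [h21])
  simp only [Fintype.card_sum, Fintype.card_fin] at hcard
  omega

end G2

end C2

theorem C2_nonGRS_general {F : Type*} [Field F] {n : ℕ}
    (α : Fin n → F) (hα : Function.Injective α) (δ : F) (k r : ℕ)
    (h6 : 6 ≤ 2 * k) (hkn : 2 * k ≤ n) (hr1 : 1 ≤ r) (hrk : r ≤ k - 1) :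
    ∀ (kk : ℕ), 2 ≤ kk → kk ≤ n + 2 → ∀ C' : Set (Fin (n + 2) → F),
      isGRS (n + 2) kk C' →
      ¬ monEquiv (rowSpan (G2 α k r δ) : Set (Fin (n + 2) → F)) C' := by
  intro kk hkk hkkn C' hGRS hmon
  obtain ⟨β, v, hβ, hv, rfl⟩ := hGRS.eq_map
  obtain ⟨π, lam, hlam, hmap⟩ := hmon.eq_map
  set V := rowSpan (G2 α k r δ)
  set D := (Polynomial.degreeLT F kk).map (grsMap kk β v)
  have hDV : D = V.map (monomialMap π lam) := SetLike.coe_injective hmap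
  have hdim : Module.finrank F V = kk := by
    rw [← finrank_map_monomialMap hlam, ← hDV]
    exact finrank_map_grsMap hβ hv (by simpa using hkkn)
  have hsq : Module.finrank F (V * V) ≤ 2 * kk - 1 := by
    rw [← finrank_map_monomialMap (π := π) (lam := lam * lam)
      fun i => mul_ne_zero (hlam i) (hlam i), ← map_monomialMap_mul, ← hDV]
    exact finrank_map_grsMap_mul_self_le (by omega) β v
  have hV : Module.finrank F V ≤ k := finrank_rowSpan_le _
  have hV2 : 2 * k ≤ Module.finrank F (V * V) :=
    two_mul_le_finrank_rowSpan_G2_mul_self α δ hα (by omega) hkn hr1 (by omega)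
  omega

/-- Theorem 5.7: if the code `C_2` generated by `G_2` is MDS, then it is not monomially
equivalent to any GRS code of length `n+2` over `F`. -/
theorem C2_nonGRS {F : Type*} [Field F] [Fintype F] {n : ℕ}
    (α : Fin n → F) (hα : Function.Injective α) (δ : F) (k r : ℕ)
    (h6 : 6 ≤ 2 * k) (hkn : 2 * k ≤ n) (hr1 : 1 ≤ r) (hrk : r ≤ k - 1)
    (hMDS : allSubNonsing (G2 α k r δ)) :
    ∀ (kk : ℕ), 2 ≤ kk → kk ≤ n + 2 → ∀ C' : Set (Fin (n + 2) → F),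
      isGRS (n + 2) kk C' →
      ¬ monEquiv (rowSpan (G2 α k r δ) : Set (Fin (n + 2) → F)) C' :=
  C2_nonGRS_general α hα δ k r h6 hkn hr1 hrk
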